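/- Let γ > 1, θ = (γ-1)/2, and let ψ(s) = ½ s|s|. For the corresponding weak entropy flux q̌(ρ, m) of the isentropic Euler system there exists M = M(γ) > 0 such that q̌(ρ, m) ≥ (1/M)(ρ|u|³ + ρ^{γ+θ}) − M(ρ + ρ|u|² + ρ^γ) for all ρ > 0 and u = m/ρ ∈ ℝ. -/

import Mathlib

/-!
Symmetrizing in `s`, `q̌(ρ, ρu) = ρ ∫₀¹ [F(ρ^θ s) + F(-ρ^θ s)] (1 - s²)^λ ds` with
`F(b) = (u + θ b) ψ(u + b)`. The even part `F(b) + F(-b)` is even in `u`, and for `u, b ≥ 0` it equals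
`u³ + (1 + 2θ) u b²` when `b ≤ u` and `2u²b + θ b (u² + b²)` when `u ≤ b`; either way it is at least
`min(1, θ)/2 · (u³ + b³)`. Integrating against `s³ (1 - s²)^λ` gives
`q̌ ≥ c (ρ|u|³ + ρ^{γ+θ})` with `c > 0`, so the lower-order terms are not even needed.
-/

/-- The weak entropy flux generated by `ψ(s) = ½ s|s|`. -/
noncomputable def qcheck (γ ρ m : ℝ) : ℝ :=
  ρ * ∫ s in (-1 : ℝ)..1,
    (m / ρ + (γ - 1) / 2 * ρ ^ ((γ - 1) / 2) * s)
      * (1 / 2 * (m / ρ + ρ ^ ((γ - 1) / 2) * s) * |m / ρ + ρ ^ ((γ - 1) / 2) * s|)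
      * (1 - s ^ 2) ^ ((3 - γ) / (2 * (γ - 1)))

open MeasureTheory intervalIntegral Real Set Interval

lemma intervalIntegrable_one_sub_sq_rpow_zero_one {l : ℝ} (hl : -1 < l) :
    IntervalIntegrable (fun s : ℝ => (1 - s ^ 2) ^ l) volume 0 1 := by
  have hsing : IntervalIntegrable (fun s : ℝ => (1 - s) ^ l) volume 0 1 := by
    simpa using ((intervalIntegrable_rpow' (a := 0) (b := 1) hl).comp_sub_left 1).symm
  have hcont : ContinuousOn (fun s : ℝ => (1 + s) ^ l) [[0, 1]] := by
    refine ContinuousOn.rpow_const (by fun_prop) fun s hs => Or.inl ?_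
    rw [uIcc_of_le zero_le_one] at hs
    linarith [hs.1]
  refine (hsing.continuousOn_mul hcont).congr fun s hs => ?_
  rw [uIoc_of_le zero_le_one] at hs
  rw [← mul_rpow (by linarith [hs.1]) (by linarith [hs.2])]
  ring_nf

lemma intervalIntegrable_one_sub_sq_rpow {l : ℝ} (hl : -1 < l) :
    IntervalIntegrable (fun s : ℝ => (1 - s ^ 2) ^ l) volume (-1) 1 := by
  have h := intervalIntegrable_one_sub_sq_rpow_zero_one hl
  refine IntervalIntegrable.trans ?_ h
  simpa using (IntervalIntegrable.iff_comp_neg (by simp)).mp h.symm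

lemma intervalIntegral.integral_symmetric_eq_integral_add_comp_neg {f : ℝ → ℝ} {a : ℝ}
    (hf : IntervalIntegrable f volume (-a) a) :
    ∫ s in (-a)..a, f s = ∫ s in (0 : ℝ)..a, (f s + f (-s)) := by
  have hneg : IntervalIntegrable f volume (-a) 0 :=
    hf.mono_set (by simp [uIcc_subset_uIcc_iff_le, le_total])
  have hpos : IntervalIntegrable f volume 0 a :=
    hf.mono_set (by simp [uIcc_subset_uIcc_iff_le, le_total])
  have hneg' : IntervalIntegrable (fun s => f (-s)) volume 0 a := by
    simpa using (IntervalIntegrable.iff_comp_neg (by simp)).mp hneg.symm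
  rw [integral_add hpos hneg', ← integral_add_adjacent_intervals hneg hpos, integral_comp_neg]
  simp only [neg_zero]
  ring

/-- `(u + θ b) ψ(u + b)` with `ψ(s) = ½ s|s|`; at `b = ρ^θ s` it is the integrand of `q̌`. -/
noncomputable def fluxIntegrand (θ u b : ℝ) : ℝ := (u + θ * b) * (1 / 2 * (u + b) * |u + b|)

lemma fluxIntegrand_neg_neg (θ u b : ℝ) : fluxIntegrand θ (-u) (-b) = fluxIntegrand θ u b := by
  rw [fluxIntegrand, fluxIntegrand, ← neg_add, abs_neg]
  ring

lemma min_one_div_two_mul_le_fluxIntegrand_add_of_nonneg {θ u b : ℝ} (hθ : 0 < θ)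
    (hu : 0 ≤ u) (hb : 0 ≤ b) :
    min 1 θ / 2 * (u ^ 3 + b ^ 3) ≤ fluxIntegrand θ u b + fluxIntegrand θ u (-b) := by
  have hc : min 1 θ / 2 * (u ^ 3 + b ^ 3) ≤ 1 / 2 * (u ^ 3 + b ^ 3) ∧
      min 1 θ / 2 * (u ^ 3 + b ^ 3) ≤ θ / 2 * (u ^ 3 + b ^ 3) := by
    constructor <;> gcongr <;> simp
  simp only [fluxIntegrand, mul_neg, ← sub_eq_add_neg]
  rw [abs_of_nonneg (by linarith : 0 ≤ u + b)]
  rcases le_total b u with hbu | hub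
  · have hb3 : b ^ 3 ≤ u ^ 3 := by gcongr
    rw [abs_of_nonneg (by linarith : 0 ≤ u - b)]
    nlinarith [mul_nonneg (mul_nonneg hθ.le hu) (sq_nonneg b), mul_nonneg hu (sq_nonneg b)]
  · have hu3 : u ^ 3 ≤ b ^ 3 := by gcongr
    rw [abs_of_nonpos (by linarith : u - b ≤ 0)]
    nlinarith [mul_nonneg (mul_nonneg hθ.le hb) (sq_nonneg u), mul_nonneg hb (sq_nonneg u)]

lemma min_one_div_two_mul_le_fluxIntegrand_add {θ b : ℝ} (hθ : 0 < θ) (hb : 0 ≤ b) (u : ℝ) :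
    min 1 θ / 2 * (|u| ^ 3 + b ^ 3) ≤ fluxIntegrand θ u b + fluxIntegrand θ u (-b) := by
  rcases le_total 0 u with hu | hu
  · rw [abs_of_nonneg hu]
    exact min_one_div_two_mul_le_fluxIntegrand_add_of_nonneg hθ hu hb
  · rw [abs_of_nonpos hu, add_comm (fluxIntegrand θ u b), ← fluxIntegrand_neg_neg θ u (-b),
      ← fluxIntegrand_neg_neg θ u b, neg_neg]
    exact min_one_div_two_mul_le_fluxIntegrand_add_of_nonneg hθ (neg_nonneg.mpr hu) hb

lemma neg_one_lt_three_sub_div {γ : ℝ} (hγ : 1 < γ) : -1 < (3 - γ) / (2 * (γ - 1)) := by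
  rw [lt_div_iff₀ (by linarith)]
  linarith

noncomputable def cubicMoment (l : ℝ) : ℝ := ∫ s in (0 : ℝ)..1, s ^ 3 * (1 - s ^ 2) ^ l

lemma cubicMoment_pos {l : ℝ} (hl : -1 < l) : 0 < cubicMoment l := by
  refine intervalIntegral_pos_of_pos_on
    ((intervalIntegrable_one_sub_sq_rpow_zero_one hl).continuousOn_mul (by fun_prop))
    (fun s hs => ?_) zero_lt_one
  have : 0 < 1 - s ^ 2 := by nlinarith [hs.1, hs.2]
  exact mul_pos (pow_pos hs.1 3) (rpow_pos_of_pos this l)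

lemma qcheck_mul_eq (γ : ℝ) {ρ : ℝ} (hρ : ρ ≠ 0) (u : ℝ) :
    qcheck γ ρ (ρ * u) = ρ * ∫ s in (-1 : ℝ)..1,
      fluxIntegrand ((γ - 1) / 2) u (ρ ^ ((γ - 1) / 2) * s)
        * (1 - s ^ 2) ^ ((3 - γ) / (2 * (γ - 1))) := by
  simp only [qcheck, fluxIntegrand, mul_div_cancel_left₀ u hρ, mul_assoc]

lemma mul_cubicMoment_mul_le_qcheck {γ : ℝ} (hγ : 1 < γ) {ρ : ℝ} (hρ : 0 < ρ) (u : ℝ) :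
    min 1 ((γ - 1) / 2) / 2 * cubicMoment ((3 - γ) / (2 * (γ - 1)))
        * (ρ * |u| ^ 3 + ρ ^ (γ + (γ - 1) / 2)) ≤ qcheck γ ρ (ρ * u) := by
  set θ := (γ - 1) / 2 with hθ_def
  set l := (3 - γ) / (2 * (γ - 1))
  have hθ : 0 < θ := by linarith
  have hl : -1 < l := neg_one_lt_three_sub_div hγ
  set c := min 1 θ / 2
  set a := ρ ^ θ
  have ha : 0 ≤ a := by positivity
  set f := fun s : ℝ => fluxIntegrand θ u (a * s) * (1 - s ^ 2) ^ l
  have hf : IntervalIntegrable f volume (-1) 1 :=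
    (intervalIntegrable_one_sub_sq_rpow hl).continuousOn_mul
      (by unfold fluxIntegrand; fun_prop)
  have heven : ∀ s, f s + f (-s)
      = (fluxIntegrand θ u (a * s) + fluxIntegrand θ u (-(a * s))) * (1 - s ^ 2) ^ l := by
    intro s; simp only [f, neg_sq, mul_neg]; ring
  have hρa : ρ * a ^ 3 = ρ ^ (γ + θ) := by
    rw [← rpow_natCast, ← rpow_mul hρ.le, ← rpow_one_add' hρ.le (by positivity)]
    congr 1; push_cast; ring
  have hpointwise : ∀ s ∈ Icc (0 : ℝ) 1,
      c * (|u| ^ 3 + a ^ 3) * (s ^ 3 * (1 - s ^ 2) ^ l)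
        ≤ (fluxIntegrand θ u (a * s) + fluxIntegrand θ u (-(a * s))) * (1 - s ^ 2) ^ l := by
    intro s ⟨hs0, hs1⟩
    rw [← mul_assoc]
    refine mul_le_mul_of_nonneg_right ?_ (rpow_nonneg (by nlinarith) l)
    calc c * (|u| ^ 3 + a ^ 3) * s ^ 3 ≤ c * (|u| ^ 3 + (a * s) ^ 3) := by
          have hs3 : s ^ 3 ≤ 1 := pow_le_one₀ hs0 hs1
          have hc : 0 ≤ c := by positivity
          nlinarith [mul_nonneg (mul_nonneg hc (pow_nonneg (abs_nonneg u) 3)) (sub_nonneg.mpr hs3)]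
      _ ≤ _ := min_one_div_two_mul_le_fluxIntegrand_add hθ (mul_nonneg ha hs0) u
  calc c * cubicMoment l * (ρ * |u| ^ 3 + ρ ^ (γ + θ))
      = ρ * ∫ s in (0 : ℝ)..1, c * (|u| ^ 3 + a ^ 3) * (s ^ 3 * (1 - s ^ 2) ^ l) := by
        rw [intervalIntegral.integral_const_mul, cubicMoment, ← hρa]; ring
    _ ≤ ρ * ∫ s in (0 : ℝ)..1, (f s + f (-s)) := by
        simp only [heven]
        gcongr
        refine integral_mono_on zero_le_one ?_ ?_ hpointwise
        · exact ((intervalIntegrable_one_sub_sq_rpow_zero_one hl).continuousOn_mul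
            (by fun_prop)).const_mul _
        · exact (intervalIntegrable_one_sub_sq_rpow_zero_one hl).continuousOn_mul
            (by unfold fluxIntegrand; fun_prop)
    _ = qcheck γ ρ (ρ * u) := by
        rw [qcheck_mul_eq γ hρ.ne', integral_symmetric_eq_integral_add_comp_neg hf]

/-- Coercivity lower bound for the entropy flux `q̌`:
`q̌(ρ,m) ≥ (1/M)(ρ|u|³ + ρ^{γ+θ}) − M(ρ + ρ|u|² + ρ^γ)`. -/
theorem stmt9 (γ : ℝ) (hγ : 1 < γ) :
    ∃ M > 0, ∀ ρ u : ℝ, 0 < ρ →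
      qcheck γ ρ (ρ * u)
        ≥ 1 / M * (ρ * |u| ^ (3 : ℕ) + ρ ^ (γ + (γ - 1) / 2))
          - M * (ρ + ρ * u ^ 2 + ρ ^ γ) := by
  set c := min 1 ((γ - 1) / 2) / 2 * cubicMoment ((3 - γ) / (2 * (γ - 1)))
  have hc : 0 < c := by
    have := cubicMoment_pos (neg_one_lt_three_sub_div hγ)
    have : 0 < min 1 ((γ - 1) / 2) := lt_min one_pos (by linarith)
    positivity
  refine ⟨max c⁻¹ 1, by positivity, fun ρ u hρ => ?_⟩
  have hM : 1 / max c⁻¹ 1 ≤ c := by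
    rw [one_div, inv_le_comm₀ (by positivity) hc]; exact le_max_left _ _
  have hq : c * (ρ * |u| ^ 3 + ρ ^ (γ + (γ - 1) / 2)) ≤ qcheck γ ρ (ρ * u) :=
    mul_cubicMoment_mul_le_qcheck hγ hρ u
  have hmain : 1 / max c⁻¹ 1 * (ρ * |u| ^ 3 + ρ ^ (γ + (γ - 1) / 2))
      ≤ c * (ρ * |u| ^ 3 + ρ ^ (γ + (γ - 1) / 2)) := by gcongr
  have hlower : 0 ≤ max c⁻¹ 1 * (ρ + ρ * u ^ 2 + ρ ^ γ) := by positivity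
  linarith
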